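/- Let $L \ge 1$ an integer, $\delta \in (0,1)$, and for each $l \in \{1,\dots,L\}$ let $p_l \in (0,1)$, $m_l \ge 1$, $Q_l \ge 1$ be given with $q_{l-1} \ge \frac{1}{\log(1/(1-p_l))}\,\log\!\left(\frac{L\, m_l\, Q_l}{\delta}\right)$. Then $\prod_{l=1}^{L}\left(1 - (1-p_l)^{q_{l-1}}\right)^{m_l Q_l} \ge 1 - \delta$. -/

import Mathlib

/-!
Each factor is at least `1 - δ / L`: the width condition says exactly that
`(1 - p_l) ^ q_{l-1} ≤ δ / (L m_l Q_l)`, and Bernoulli's inequality for the real exponent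
`m_l Q_l ≥ 1` then costs at most `m_l Q_l` times that. Bernoulli once more gives
`(1 - δ / L) ^ L ≥ 1 - δ`.
-/

open Finset Real

lemma rpow_le_of_inv_log_inv_mul_log_inv_le {c x q : ℝ} (hc0 : 0 < c) (hc1 : c < 1) (hx : 0 < x)
    (hq : 1 / log (1 / c) * log (1 / x) ≤ q) : c ^ q ≤ x := by
  have hlogc : log c < 0 := log_neg hc0 hc1
  rw [one_div c, one_div x, log_inv, log_inv, one_div_mul_eq_div,
    div_le_iff₀ (by linarith)] at hq
  calc c ^ q = exp (log c * q) := rpow_def_of_pos hc0 q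
    _ ≤ exp (log x) := exp_le_exp.mpr (by linarith)
    _ = x := exp_log hx

lemma one_sub_le_one_sub_rpow_rpow {c n ε q : ℝ} (hc0 : 0 < c) (hc1 : c < 1) (hn : 1 ≤ n)
    (hε0 : 0 < ε) (hε1 : ε ≤ 1) (hq : 1 / log (1 / c) * log (n / ε) ≤ q) :
    1 - ε ≤ (1 - c ^ q) ^ n := by
  have hn0 : 0 < n := by linarith
  have hcq : c ^ q ≤ ε / n :=
    rpow_le_of_inv_log_inv_mul_log_inv_le hc0 hc1 (by positivity) (by rwa [one_div_div])
  have hncq : n * c ^ q ≤ ε := by rwa [le_div_iff₀ hn0, mul_comm] at hcq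
  have hcq1 : c ^ q ≤ 1 := (hcq.trans (div_le_self hε0.le hn)).trans hε1
  have bernoulli := one_add_mul_self_le_rpow_one_add (s := -c ^ q) (by linarith) hn
  rw [← sub_eq_add_neg] at bernoulli
  linarith

lemma one_sub_le_prod_of_one_sub_div_card_le {ι : Type*} (s : Finset ι) (f : ι → ℝ) {δ : ℝ}
    (hδ0 : 0 ≤ δ) (hδ1 : δ ≤ 1) (hf : ∀ i ∈ s, 1 - δ / #s ≤ f i) :
    1 - δ ≤ ∏ i ∈ s, f i := by
  rcases s.eq_empty_or_nonempty with rfl | hs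
  · simp [hδ0]
  have hs1 : (1 : ℝ) ≤ #s := by exact_mod_cast card_pos.mpr hs
  have hδs : δ / #s ≤ δ := div_le_self hδ0 hs1
  calc 1 - δ = 1 + #s * -(δ / #s) := by field_simp; ring
    _ ≤ (1 - δ / #s) ^ #s := by
        rw [sub_eq_add_neg]
        exact one_add_mul_le_pow (by linarith) _
    _ = ∏ _i ∈ s, (1 - δ / #s) := (prod_const _).symm
    _ ≤ ∏ i ∈ s, f i := prod_le_prod (fun _ _ => by linarith) hf

theorem stmt_7_general (L : ℕ) (δ : ℝ) (hδ : δ ∈ Set.Ioo (0:ℝ) 1)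
    (p m Q q : ℕ → ℝ)
    (hp : ∀ l ∈ Finset.Icc 1 L, p l ∈ Set.Ioo (0:ℝ) 1)
    (hm : ∀ l ∈ Finset.Icc 1 L, 1 ≤ m l)
    (hQ : ∀ l ∈ Finset.Icc 1 L, 1 ≤ Q l)
    (hq : ∀ l ∈ Finset.Icc 1 L,
      q (l - 1) ≥ (1 / Real.log (1 / (1 - p l))) * Real.log (L * m l * Q l / δ)) :
    ∏ l ∈ Finset.Icc 1 L, (1 - (1 - p l) ^ q (l - 1)) ^ (m l * Q l) ≥ 1 - δ := by
  obtain ⟨hδ0, hδ1⟩ := hδ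
  have hcard : ((#(Icc 1 L) : ℕ) : ℝ) = L := by simp
  refine one_sub_le_prod_of_one_sub_div_card_le _ _ hδ0.le hδ1.le fun l hl => ?_
  obtain ⟨hp0, hp1⟩ := hp l hl
  have hL : (1 : ℝ) ≤ L := by exact_mod_cast (mem_Icc.mp hl).1.trans (mem_Icc.mp hl).2
  have hwidth : L * m l * Q l / δ = m l * Q l / (δ / L) := by field_simp
  rw [hcard]
  refine one_sub_le_one_sub_rpow_rpow (by linarith) (by linarith)
    (one_le_mul_of_one_le_of_one_le (hm l hl) (hQ l hl)) (by positivity)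
    (div_le_one_of_le₀ (by linarith) (by linarith)) ?_
  rw [← hwidth]
  exact hq l hl

/-- Probability estimate for WLT existence in depth-L ER networks:
    the per-layer width conditions imply the product bound ≥ 1 - δ.
    Here `q l`, `p l`, `m l`, `Q l` stand for q_{l-1}, p_l, m_l, Q_l with l = 1,…,L. -/
theorem stmt_7 (L : ℕ) (hL : 1 ≤ L) (δ : ℝ) (hδ : δ ∈ Set.Ioo (0:ℝ) 1)
    (p m Q q : ℕ → ℝ)
    (hp : ∀ l ∈ Finset.Icc 1 L, p l ∈ Set.Ioo (0:ℝ) 1)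
    (hm : ∀ l ∈ Finset.Icc 1 L, 1 ≤ m l)
    (hQ : ∀ l ∈ Finset.Icc 1 L, 1 ≤ Q l)
    (hq : ∀ l ∈ Finset.Icc 1 L,
      q (l - 1) ≥ (1 / Real.log (1 / (1 - p l))) * Real.log (L * m l * Q l / δ)) :
    ∏ l ∈ Finset.Icc 1 L, (1 - (1 - p l) ^ q (l - 1)) ^ (m l * Q l) ≥ 1 - δ :=
  stmt_7_general L δ hδ p m Q q hp hm hQ hq
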